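/- The maps φ_a : (z,w) ↦ (z - a, e^{⟨z,a⟩ - ‖a‖²/2} w) for a ∈ ℂⁿ are automorphisms of D_{n,m} = {(z,w) ∈ ℂⁿ × ℂᵐ : ‖w‖² < e^{-‖z‖²}}: for each a ∈ ℂⁿ, φ_a(D_{n,m}) = D_{n,m} and φ_{-a} ∘ φ_a = id on D_{n,m}. -/

import Mathlib

/-- The Fock-Bargmann-Hartogs domain `D_{n,m}`. -/
def FBH (n m : ℕ) : Set (EuclideanSpace ℂ (Fin n) × EuclideanSpace ℂ (Fin m)) :=
  {p | ‖p.2‖ ^ 2 < Real.exp (-‖p.1‖ ^ 2)}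

/-- The automorphism `φ_a : (z,w) ↦ (z - a, e^{⟨z,a⟩ - ‖a‖²/2} w)`,
where `⟨z,a⟩ = ∑ z_j conj(a_j)`. -/
noncomputable def phiAut (n m : ℕ) (a : EuclideanSpace ℂ (Fin n)) :
    EuclideanSpace ℂ (Fin n) × EuclideanSpace ℂ (Fin m) →
      EuclideanSpace ℂ (Fin n) × EuclideanSpace ℂ (Fin m) :=
  fun p => (p.1 - a, Complex.exp ((inner ℂ a p.1 : ℂ) - (‖a‖ : ℂ) ^ 2 / 2) • p.2)

lemma phi_inv (n m : ℕ) (a : EuclideanSpace ℂ (Fin n)) (p) :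
    phiAut n m (-a) (phiAut n m a p) = p := by
  obtain ⟨z, w⟩ := p
  simp only [phiAut, Prod.mk.injEq]
  constructor
  · abel
  · rw [smul_smul, ← Complex.exp_add]
    have h1 : (inner ℂ (-a) (z - a) : ℂ) = -(inner ℂ a z : ℂ) + (‖a‖ : ℂ) ^ 2 := by
      rw [inner_neg_left, inner_sub_right, inner_self_eq_norm_sq_to_K, neg_sub,
        sub_eq_neg_add]; rfl
    rw [h1]
    have : -(inner ℂ a z : ℂ) + (‖a‖ : ℂ) ^ 2 - (‖(-a : EuclideanSpace ℂ (Fin n))‖ : ℂ) ^ 2 / 2 +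
        ((inner ℂ a z : ℂ) - (‖a‖ : ℂ) ^ 2 / 2) = 0 := by
      rw [norm_neg]; ring
    rw [this, Complex.exp_zero, one_smul]

lemma phi_mem_iff (n m : ℕ) (a : EuclideanSpace ℂ (Fin n)) (p) :
    phiAut n m a p ∈ FBH n m ↔ p ∈ FBH n m := by
  obtain ⟨z, w⟩ := p
  simp only [phiAut, FBH, Set.mem_setOf_eq]
  rw [norm_smul, Complex.norm_exp, mul_pow, ← Real.exp_nat_mul]
  have hre : ((inner ℂ a z : ℂ) - (‖a‖ : ℂ) ^ 2 / 2).re = (inner ℂ a z : ℂ).re - ‖a‖ ^ 2 / 2 := by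
    simp [Complex.sub_re, Complex.div_re, ← Complex.ofReal_pow]
  have hns : ‖z - a‖ ^ 2 = ‖z‖ ^ 2 - 2 * (inner ℂ a z : ℂ).re + ‖a‖ ^ 2 := by
    rw [@norm_sub_sq ℂ, ← inner_conj_symm z a]
    simpa using inner_re_symm (𝕜 := ℂ) z a
  have hkey : Real.exp (-‖z - a‖ ^ 2) =
      Real.exp ((2 : ℕ) * ((inner ℂ a z : ℂ) - (‖a‖ : ℂ) ^ 2 / 2).re) * Real.exp (-‖z‖ ^ 2) := by
    rw [← Real.exp_add, hre, hns]; ring_nf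
  rw [hkey]
  exact mul_lt_mul_iff_right₀ (Real.exp_pos _)

theorem stmt_17 (n m : ℕ) (a : EuclideanSpace ℂ (Fin n)) :
    phiAut n m a '' FBH n m = FBH n m ∧
    ∀ p ∈ FBH n m, phiAut n m (-a) (phiAut n m a p) = p := by
  refine ⟨?_, fun p _ => phi_inv n m a p⟩
  ext q
  constructor
  · rintro ⟨p, hp, rfl⟩
    exact (phi_mem_iff n m a p).mpr hp
  · intro hq
    refine ⟨phiAut n m (-a) q, (phi_mem_iff n m (-a) q).mpr hq, ?_⟩
    have := phi_inv n m (-a) q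
    rwa [neg_neg] at this
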